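/- (Corollary 2) For every fixed real number a, the function σ_a(x) := ξ(x, x+a) is log-convex in x; in particular, for all real x and y, σ_a(x)·σ_a(y) ≥ (σ_a((x+y)/2))². -/

import Mathlib

/-!
`λ_s` is the Jensen gap `E φ_s(X) - φ_s(E X)` of a function with `φ_s'' = x^(s-2)`. Taylor's
formula with integral remainder around `m = E X`, whose linear term has mean zero, writes
`λ_s = ∫∫ (1 - u) (X - m)² G^(s-2) du dℙ` with `G = m + u (X - m) > 0`, i.e. `λ_s = ∫ w G^s` for a
nonnegative weight `w` on `Ω × (0, 1]`. For any such moment function `L s = ∫ w G^s`, symmetrizing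
over two independent copies gives
`L s L (s + a) - L (s + a/2)² = ∫∫ ½ w₁ w₂ (G₁^(a/2) - G₂^(a/2))² (G₁ G₂)^s`,
again a moment function of the same kind, and every such function is midpoint log-convex by
Cauchy–Schwarz.
-/

open MeasureTheory

/-- The moment difference `λ_s(X)` of a positive random variable `X`. -/
noncomputable def momentLambda {Ω : Type*} [MeasurableSpace Ω] (μ : Measure Ω) (X : Ω → ℝ)
    (s : ℝ) : ℝ :=
  if s = 0 then Real.log (∫ ω, X ω ∂μ) - ∫ ω, Real.log (X ω) ∂μ
  else if s = 1 then (∫ ω, X ω * Real.log (X ω) ∂μ) - (∫ ω, X ω ∂μ) * Real.log (∫ ω, X ω ∂μ)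
  else ((∫ ω, X ω ^ s ∂μ) - (∫ ω, X ω ∂μ) ^ s) / (s * (s - 1))

/-- `ξ(s,t) := λ_s λ_t - (λ_{(s+t)/2})²`. -/
noncomputable def momentXi {Ω : Type*} [MeasurableSpace Ω] (μ : Measure Ω) (X : Ω → ℝ)
    (s t : ℝ) : ℝ :=
  momentLambda μ X s * momentLambda μ X t - (momentLambda μ X ((s + t) / 2)) ^ 2

open Real Set

theorem ae_prod_and {α β : Type*} [MeasurableSpace α] [MeasurableSpace β] {μ : Measure α}
    {ν : Measure β} [SFinite ν] {P : α → Prop} {Q : β → Prop} (hP : ∀ᵐ p ∂μ, P p)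
    (hQ : ∀ᵐ q ∂ν, Q q) : ∀ᵐ z ∂μ.prod ν, P z.1 ∧ Q z.2 :=
  (Measure.quasiMeasurePreserving_fst.ae hP).and (Measure.quasiMeasurePreserving_snd.ae hQ)

lemma mul_sq_sub_rpow_half_mul_rpow_eq {g₁ g₂ : ℝ} (hg₁ : 0 < g₁) (hg₂ : 0 < g₂) (v₁ v₂ s a : ℝ) :
    v₁ * v₂ * (g₁ ^ (a / 2) - g₂ ^ (a / 2)) ^ 2 / 2 * (g₁ * g₂) ^ s =
      (v₁ * g₁ ^ s * (v₂ * g₂ ^ (s + a)) + v₁ * g₁ ^ (s + a) * (v₂ * g₂ ^ s)) / 2 -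
        v₁ * g₁ ^ (s + a / 2) * (v₂ * g₂ ^ (s + a / 2)) := by
  have hsplit : ∀ {g : ℝ}, 0 < g → g ^ (s + a) = g ^ s * g ^ (a / 2) * g ^ (a / 2) ∧
      g ^ (s + a / 2) = g ^ s * g ^ (a / 2) := fun hg =>
    ⟨by rw [← rpow_add hg, ← rpow_add hg]; ring_nf, rpow_add hg _ _⟩
  rw [mul_rpow hg₁.le hg₂.le, (hsplit hg₁).1, (hsplit hg₁).2, (hsplit hg₂).1, (hsplit hg₂).2]
  ring

section RpowMoment

variable {α : Type*} [MeasurableSpace α] {κ : Measure α}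

noncomputable def rpowMoment (κ : Measure α) (w H : α → ℝ) (s : ℝ) : ℝ :=
  ∫ p, w p * H p ^ s ∂κ

theorem rpowMoment_midpoint_sq_le {w H : α → ℝ} (hw : 0 ≤ᵐ[κ] w) (hH : ∀ᵐ p ∂κ, 0 < H p)
    (hint : ∀ s : ℝ, Integrable (fun p => w p * H p ^ s) κ) (x y : ℝ) :
    rpowMoment κ w H ((x + y) / 2) ^ 2 ≤ rpowMoment κ w H x * rpowMoment κ w H y := by
  -- Cauchy–Schwarz: `w (c H^(x/2) + H^(y/2))² ≥ 0` integrates to a nonnegative quadratic in `c`.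
  have hquad : ∀ c : ℝ, 0 ≤ rpowMoment κ w H x * (c * c) +
      2 * rpowMoment κ w H ((x + y) / 2) * c + rpowMoment κ w H y := by
    intro c
    have hsq : ∀ᵐ p ∂κ, w p * (c * H p ^ (x / 2) + H p ^ (y / 2)) ^ 2 =
        c * c * (w p * H p ^ x) + 2 * c * (w p * H p ^ ((x + y) / 2)) + w p * H p ^ y := by
      filter_upwards [hH] with p hp
      have hx : H p ^ x = H p ^ (x / 2) * H p ^ (x / 2) := by rw [← rpow_add hp]; ring_nf
      have hy : H p ^ y = H p ^ (y / 2) * H p ^ (y / 2) := by rw [← rpow_add hp]; ring_nf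
      have hxy : H p ^ ((x + y) / 2) = H p ^ (x / 2) * H p ^ (y / 2) := by
        rw [← rpow_add hp]; ring_nf
      rw [hx, hy, hxy]; ring
    have hnonneg : 0 ≤ ∫ p, (c * c * (w p * H p ^ x) + 2 * c * (w p * H p ^ ((x + y) / 2)) +
        w p * H p ^ y) ∂κ :=
      integral_nonneg_of_ae <| by
        filter_upwards [hw, hsq] with p hwp hp
        rw [← hp]
        exact mul_nonneg hwp (sq_nonneg _)
    have hx := (hint x).const_mul (c * c)
    have hxy := (hint ((x + y) / 2)).const_mul (2 * c)
    rw [integral_add (hx.fun_add hxy) (hint y), integral_add hx hxy, integral_const_mul,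
      integral_const_mul] at hnonneg
    simp only [rpowMoment]
    linarith
  have := discrim_le_zero hquad
  rw [discrim] at this
  nlinarith

noncomputable def gapWeight (v G : α → ℝ) (a : ℝ) (z : α × α) : ℝ :=
  v z.1 * v z.2 * (G z.1 ^ (a / 2) - G z.2 ^ (a / 2)) ^ 2 / 2

variable [SFinite κ] {v G : α → ℝ}

lemma gapWeight_mul_rpow_ae_eq (hG : ∀ᵐ p ∂κ, 0 < G p) (a s : ℝ) :
    (fun z => gapWeight v G a z * (G z.1 * G z.2) ^ s) =ᵐ[κ.prod κ] fun z =>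
      (v z.1 * G z.1 ^ s * (v z.2 * G z.2 ^ (s + a)) +
          v z.1 * G z.1 ^ (s + a) * (v z.2 * G z.2 ^ s)) / 2 -
        v z.1 * G z.1 ^ (s + a / 2) * (v z.2 * G z.2 ^ (s + a / 2)) := by
  filter_upwards [ae_prod_and hG hG] with z hz
  exact mul_sq_sub_rpow_half_mul_rpow_eq hz.1 hz.2 _ _ s a

lemma integrable_gapWeight_mul_rpow (hG : ∀ᵐ p ∂κ, 0 < G p)
    (hint : ∀ s : ℝ, Integrable (fun p => v p * G p ^ s) κ) (a s : ℝ) :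
    Integrable (fun z => gapWeight v G a z * (G z.1 * G z.2) ^ s) (κ.prod κ) := by
  refine Integrable.congr ?_ (gapWeight_mul_rpow_ae_eq hG a s).symm
  exact Integrable.sub'
    ((((hint s).mul_prod (hint (s + a))).fun_add ((hint (s + a)).mul_prod (hint s))).div_const 2)
    ((hint _).mul_prod (hint _))

theorem rpowMoment_gap_eq (hG : ∀ᵐ p ∂κ, 0 < G p)
    (hint : ∀ s : ℝ, Integrable (fun p => v p * G p ^ s) κ) (a s : ℝ) :
    rpowMoment κ v G s * rpowMoment κ v G (s + a) - rpowMoment κ v G (s + a / 2) ^ 2 =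
      rpowMoment (κ.prod κ) (gapWeight v G a) (fun z => G z.1 * G z.2) s := by
  have h₁ := (hint s).mul_prod (hint (s + a))
  have h₂ := (hint (s + a)).mul_prod (hint s)
  have h₃ := (hint (s + a / 2)).mul_prod (hint (s + a / 2))
  have hprod : ∀ t u, ∫ z, v z.1 * G z.1 ^ t * (v z.2 * G z.2 ^ u) ∂κ.prod κ =
      rpowMoment κ v G t * rpowMoment κ v G u := fun t u =>
    integral_prod_mul (fun p => v p * G p ^ t) (fun p => v p * G p ^ u)
  conv_rhs => rw [rpowMoment]
  rw [integral_congr_ae (gapWeight_mul_rpow_ae_eq hG a s),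
    integral_sub ((h₁.fun_add h₂).div_const 2) h₃, integral_div, integral_add h₁ h₂,
    hprod, hprod, hprod]
  ring

theorem rpowMoment_gap_midpoint_sq_le (hv : 0 ≤ᵐ[κ] v) (hG : ∀ᵐ p ∂κ, 0 < G p)
    (hint : ∀ s : ℝ, Integrable (fun p => v p * G p ^ s) κ)
    (a x y : ℝ) :
    (rpowMoment κ v G ((x + y) / 2) * rpowMoment κ v G ((x + y) / 2 + a) -
        rpowMoment κ v G ((x + y) / 2 + a / 2) ^ 2) ^ 2 ≤
      (rpowMoment κ v G x * rpowMoment κ v G (x + a) - rpowMoment κ v G (x + a / 2) ^ 2) *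
        (rpowMoment κ v G y * rpowMoment κ v G (y + a) - rpowMoment κ v G (y + a / 2) ^ 2) := by
  rw [rpowMoment_gap_eq hG hint, rpowMoment_gap_eq hG hint, rpowMoment_gap_eq hG hint]
  refine rpowMoment_midpoint_sq_le ?_ ?_ (integrable_gapWeight_mul_rpow hG hint a) x y
  · filter_upwards [ae_prod_and hv hv] with z hz
    exact div_nonneg (mul_nonneg (mul_nonneg hz.1 hz.2) (sq_nonneg _)) zero_le_two
  · filter_upwards [ae_prod_and hG hG] with z hz
    exact mul_pos hz.1 hz.2

end RpowMoment

theorem taylor_integral_remainder_one_unitInterval {f f' f'' : ℝ → ℝ} {m c : ℝ}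
    (hf : ∀ u ∈ uIcc (0 : ℝ) 1, HasDerivAt f (f' (m + u * c)) (m + u * c))
    (hf' : ∀ u ∈ uIcc (0 : ℝ) 1, HasDerivAt f' (f'' (m + u * c)) (m + u * c))
    (hf'' : ContinuousOn (fun u => f'' (m + u * c)) (uIcc 0 1)) :
    f (m + c) - f m - f' m * c = ∫ u in (0 : ℝ)..1, (1 - u) * c ^ 2 * f'' (m + u * c) := by
  have hline : ∀ u : ℝ, HasDerivAt (fun u => m + u * c) c u := fun u => by
    simpa using ((hasDerivAt_id u).mul_const c).const_add m
  have hweight : ∀ u : ℝ, HasDerivAt (fun u => (1 - u) * c) (-c) u := fun u => by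
    simpa using ((hasDerivAt_id u).const_sub 1).mul_const c
  -- `u ↦ f (m + u c) + f' (m + u c) (1 - u) c` is the first-order Taylor polynomial at `m + u c`,
  -- evaluated at `m + c`.
  have hT : ∀ u ∈ uIcc (0 : ℝ) 1, HasDerivAt
      (fun u => f (m + u * c) + f' (m + u * c) * ((1 - u) * c))
      ((1 - u) * c ^ 2 * f'' (m + u * c)) u := fun u hu => by
    refine (((hf u hu).comp u (hline u)).fun_add
      (((hf' u hu).comp u (hline u)).fun_mul (hweight u))).congr_deriv ?_
    simp only [Function.comp_apply]
    ring
  have hcont : ContinuousOn (fun u => (1 - u) * c ^ 2 * f'' (m + u * c)) (uIcc 0 1) :=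
    ((continuousOn_const.sub continuousOn_id).mul continuousOn_const).mul hf''
  rw [intervalIntegral.integral_eq_sub_of_hasDerivAt hT hcont.intervalIntegrable]
  simp only [one_mul, sub_self, zero_mul, mul_zero, add_zero, sub_zero]
  ring

noncomputable def powerGenerator (s x : ℝ) : ℝ :=
  if s = 0 then -log x else if s = 1 then x * log x else x ^ s / (s * (s - 1))

noncomputable def powerGeneratorDeriv (s x : ℝ) : ℝ :=
  if s = 0 then -x⁻¹ else if s = 1 then log x + 1 else x ^ (s - 1) / (s - 1)

theorem hasDerivAt_powerGenerator (s : ℝ) {x : ℝ} (hx : 0 < x) :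
    HasDerivAt (powerGenerator s) (powerGeneratorDeriv s x) x := by
  unfold powerGenerator powerGeneratorDeriv
  split_ifs with h0 h1
  · exact (hasDerivAt_log hx.ne').neg
  · refine ((hasDerivAt_id x).fun_mul (hasDerivAt_log hx.ne')).congr_deriv ?_
    simp [hx.ne']
  · have hs1 : s - 1 ≠ 0 := sub_ne_zero.mpr h1
    refine ((hasDerivAt_rpow_const (Or.inl hx.ne')).div_const (s * (s - 1))).congr_deriv ?_
    field_simp

theorem hasDerivAt_powerGeneratorDeriv (s : ℝ) {x : ℝ} (hx : 0 < x) :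
    HasDerivAt (powerGeneratorDeriv s) (x ^ (s - 2)) x := by
  unfold powerGeneratorDeriv
  split_ifs with h0 h1
  · subst h0
    refine (hasDerivAt_inv hx.ne').neg.congr_deriv ?_
    rw [zero_sub, rpow_neg hx.le, neg_neg, rpow_two]
  · subst h1
    refine ((hasDerivAt_log hx.ne').add_const 1).congr_deriv ?_
    norm_num [rpow_neg_one]
  · have hs1 : s - 1 ≠ 0 := sub_ne_zero.mpr h1
    refine ((hasDerivAt_rpow_const (Or.inl hx.ne')).div_const (s - 1)).congr_deriv ?_
    rw [sub_sub, one_add_one_eq_two]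
    field_simp

theorem add_mul_sub_pos {m x u : ℝ} (hm : 0 < m) (hx : 0 < x) (hu₀ : 0 ≤ u) (hu₁ : u ≤ 1) :
    0 < m + u * (x - m) := by
  rcases hu₁.lt_or_eq with hu | rfl
  · nlinarith [mul_pos (sub_pos.2 hu) hm, mul_nonneg hu₀ hx.le]
  · simpa using hx

noncomputable def taylorWeight (m x u : ℝ) : ℝ :=
  (1 - u) * (x - m) ^ 2 / (m + u * (x - m)) ^ 2

theorem integral_taylorWeight_mul_rpow {m x : ℝ} (hm : 0 < m) (hx : 0 < x) (s : ℝ) :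
    ∫ u in Ioc 0 1, taylorWeight m x u * (m + u * (x - m)) ^ s =
      powerGenerator s x - powerGenerator s m - powerGeneratorDeriv s m * (x - m) := by
  have hpos : ∀ u ∈ uIcc (0 : ℝ) 1, 0 < m + u * (x - m) := fun u hu => by
    rw [uIcc_of_le zero_le_one] at hu
    exact add_mul_sub_pos hm hx hu.1 hu.2
  have htaylor := taylor_integral_remainder_one_unitInterval (f := powerGenerator s)
    (f'' := fun t => t ^ (s - 2)) (c := x - m)
    (fun u hu => hasDerivAt_powerGenerator s (hpos u hu))
    (fun u hu => hasDerivAt_powerGeneratorDeriv s (hpos u hu))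
    (ContinuousOn.rpow_const (by fun_prop) fun u hu => Or.inl (hpos u hu).ne')
  rw [add_sub_cancel] at htaylor
  rw [htaylor, ← intervalIntegral.integral_of_le zero_le_one]
  refine intervalIntegral.integral_congr fun u hu => ?_
  have hG := hpos u hu
  simp only [taylorWeight, rpow_sub hG, rpow_two]
  field_simp

theorem taylorWeight_nonneg (m x : ℝ) {u : ℝ} (hu : u ≤ 1) : 0 ≤ taylorWeight m x u :=
  div_nonneg (mul_nonneg (sub_nonneg.2 hu) (sq_nonneg _)) (sq_nonneg _)

section TaylorKernel

variable {Ω : Type*} [MeasurableSpace Ω] {μ : Measure Ω} {X : Ω → ℝ} {m : ℝ}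

theorem integrable_taylorWeight_mul_rpow (hX : Measurable X) (hpos : ∀ᵐ ω ∂μ, 0 < X ω)
    (hm : 0 < m) (s : ℝ) (hR : Integrable (fun ω => powerGenerator s (X ω) - powerGenerator s m -
      powerGeneratorDeriv s m * (X ω - m)) μ) :
    Integrable (fun z : Ω × ℝ => taylorWeight m (X z.1) z.2 * (m + z.2 * (X z.1 - m)) ^ s)
      (μ.prod (volume.restrict (Ioc 0 1))) := by
  have hmeas : Measurable fun z : Ω × ℝ =>
      taylorWeight m (X z.1) z.2 * (m + z.2 * (X z.1 - m)) ^ s := by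
    unfold taylorWeight; fun_prop
  rw [integrable_prod_iff hmeas.aestronglyMeasurable]
  constructor
  · filter_upwards [hpos] with ω hω
    have hG : ∀ u ∈ Icc (0 : ℝ) 1, m + u * (X ω - m) ≠ 0 := fun u hu =>
      (add_mul_sub_pos hm hω hu.1 hu.2).ne'
    refine ContinuousOn.integrableOn_Icc (μ := volume) ?_ |>.mono_set Ioc_subset_Icc_self
    unfold taylorWeight
    exact (ContinuousOn.div (by fun_prop) (by fun_prop) fun u hu => pow_ne_zero 2 (hG u hu)).mul
      (ContinuousOn.rpow_const (by fun_prop) fun u hu => Or.inl (hG u hu))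
  · refine hR.congr ?_
    filter_upwards [hpos] with ω hω
    rw [← integral_taylorWeight_mul_rpow hm hω s]
    refine setIntegral_congr_fun measurableSet_Ioc fun u hu => (norm_of_nonneg ?_).symm
    exact mul_nonneg (taylorWeight_nonneg _ _ hu.2)
      (rpow_nonneg (add_mul_sub_pos hm hω hu.1.le hu.2).le _)

theorem integral_taylorWeight_mul_rpow_prod [SFinite μ] (hpos : ∀ᵐ ω ∂μ, 0 < X ω) (hm : 0 < m)
    (s : ℝ) (hint : Integrable (fun z : Ω × ℝ =>
      taylorWeight m (X z.1) z.2 * (m + z.2 * (X z.1 - m)) ^ s)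
      (μ.prod (volume.restrict (Ioc 0 1)))) :
    ∫ z, taylorWeight m (X z.1) z.2 * (m + z.2 * (X z.1 - m)) ^ s
        ∂μ.prod (volume.restrict (Ioc 0 1)) =
      ∫ ω, (powerGenerator s (X ω) - powerGenerator s m -
        powerGeneratorDeriv s m * (X ω - m)) ∂μ := by
  rw [integral_prod _ hint]
  refine integral_congr_ae ?_
  filter_upwards [hpos] with ω hω
  exact integral_taylorWeight_mul_rpow hm hω s

end TaylorKernel

section Moments

variable {Ω : Type*} [MeasurableSpace Ω] {μ : Measure Ω} {X : Ω → ℝ}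

theorem integral_pos_of_ae_pos [NeZero μ] {f : Ω → ℝ} (hf : ∀ᵐ ω ∂μ, 0 < f ω)
    (hfi : Integrable f μ) : 0 < ∫ ω, f ω ∂μ := by
  refine (integral_pos_iff_support_of_nonneg_ae (hf.mono fun _ h => h.le) hfi).2
    (pos_iff_ne_zero.2 fun h0 => ?_)
  obtain ⟨ω, hpos, hzero⟩ := (hf.and (measure_eq_zero_iff_ae_notMem.1 h0)).exists
  exact hzero hpos.ne'

theorem momentLambda_eq_integral_powerGenerator_sub (μ : Measure Ω) (X : Ω → ℝ) (s : ℝ) :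
    momentLambda μ X s =
      ∫ ω, powerGenerator s (X ω) ∂μ - powerGenerator s (∫ ω, X ω ∂μ) := by
  unfold momentLambda powerGenerator
  split_ifs
  · rw [integral_neg]; ring
  · rfl
  · rw [integral_div, sub_div]

theorem integrable_powerGenerator_comp (hmom : ∀ s : ℝ, Integrable (fun ω => X ω ^ s) μ)
    (hlog : Integrable (fun ω => log (X ω)) μ) (hxlog : Integrable (fun ω => X ω * log (X ω)) μ)
    (s : ℝ) : Integrable (fun ω => powerGenerator s (X ω)) μ := by
  unfold powerGenerator
  split_ifs
  exacts [hlog.neg, hxlog, (hmom s).div_const _]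

theorem integrable_taylorRemainder_comp [IsFiniteMeasure μ] (hX : Integrable X μ) {f : ℝ → ℝ}
    (hf : Integrable (fun ω => f (X ω)) μ) (m d : ℝ) :
    Integrable (fun ω => f (X ω) - f m - d * (X ω - m)) μ :=
  (hf.sub' (integrable_const _)).sub' ((hX.sub' (integrable_const _)).const_mul _)

theorem integral_taylorRemainder_comp [IsProbabilityMeasure μ] (hX : Integrable X μ)
    {f : ℝ → ℝ} (hf : Integrable (fun ω => f (X ω)) μ) (d : ℝ) :
    ∫ ω, (f (X ω) - f (∫ ω, X ω ∂μ) - d * (X ω - ∫ ω, X ω ∂μ)) ∂μ =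
      ∫ ω, f (X ω) ∂μ - f (∫ ω, X ω ∂μ) := by
  rw [integral_sub (hf.sub' (integrable_const _)) ((hX.sub' (integrable_const _)).const_mul _),
    integral_sub hf (integrable_const _), integral_const_mul, integral_sub hX (integrable_const _)]
  simp

end Moments

theorem corollary2 {Ω : Type*} [MeasurableSpace Ω] (μ : Measure Ω) [IsProbabilityMeasure μ]
    (X : Ω → ℝ) (hX : Measurable X) (hpos : ∀ᵐ ω ∂μ, 0 < X ω)
    (hmom : ∀ s : ℝ, Integrable (fun ω => X ω ^ s) μ)
    (hlog : Integrable (fun ω => Real.log (X ω)) μ)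
    (hxlog : Integrable (fun ω => X ω * Real.log (X ω)) μ)
    (a : ℝ) (x y : ℝ) :
    momentXi μ X x (x + a) * momentXi μ X y (y + a) ≥
      (momentXi μ X ((x + y) / 2) ((x + y) / 2 + a)) ^ 2 := by
  have hXint : Integrable X μ := by simpa using hmom 1
  set m := ∫ ω, X ω ∂μ
  have hm : 0 < m := integral_pos_of_ae_pos hpos hXint
  have hφ := integrable_powerGenerator_comp hmom hlog hxlog
  have hint := fun s => integrable_taylorWeight_mul_rpow hX hpos hm s
    (integrable_taylorRemainder_comp hXint (hφ s) m _)
  have hrep : momentLambda μ X = rpowMoment (μ.prod (volume.restrict (Ioc 0 1)))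
      (fun z => taylorWeight m (X z.1) z.2) (fun z => m + z.2 * (X z.1 - m)) := funext fun s => by
    rw [rpowMoment, integral_taylorWeight_mul_rpow_prod hpos hm s (hint s),
      integral_taylorRemainder_comp hXint (hφ s), momentLambda_eq_integral_powerGenerator_sub]
  have hunit := ae_prod_and hpos
    (ae_restrict_mem (μ := volume) (measurableSet_Ioc (a := (0 : ℝ)) (b := 1)))
  have key := rpowMoment_gap_midpoint_sq_le
    (hunit.mono fun z hz => taylorWeight_nonneg m _ hz.2.2)
    (hunit.mono fun z hz => add_mul_sub_pos hm hz.1 hz.2.1.le hz.2.2) hint a x y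
  rw [ge_iff_le, momentXi, momentXi, momentXi, hrep, show (x + (x + a)) / 2 = x + a / 2 by ring,
    show (y + (y + a)) / 2 = y + a / 2 by ring,
    show ((x + y) / 2 + ((x + y) / 2 + a)) / 2 = (x + y) / 2 + a / 2 by ring]
  exact key
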